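/- arXiv:2101.08561 — 3 statements merged into one kernel-verified Lean document; each statement's English description precedes it below -/
import Mathlib

section
/- Let f : ℝ → ℝ be convex and continuous on an interval [a,b], and let x₀ ∈ [a,b] be a point where f attains its minimum over [a,b]. Then the function x ↦ f(max x x₀) is convex on [a,b]. -/
theorem clamp_max_convex (a b x₀ : ℝ) (f : ℝ → ℝ)
    (hab : a ≤ b)
    (hconv : ConvexOn ℝ (Set.Icc a b) f)
    (hcont : ContinuousOn f (Set.Icc a b))
    (hx₀ : x₀ ∈ Set.Icc a b)
    (hmin : ∀ x ∈ Set.Icc a b, f x₀ ≤ f x) :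
    ConvexOn ℝ (Set.Icc a b) (fun x => f (max x x₀)) := by
  obtain ⟨hax₀, hx₀b⟩ := hx₀
  set m : ℝ → ℝ := fun x => max x x₀ with hm
  have himg : m '' Set.Icc a b = Set.Icc x₀ b := by
    ext y
    constructor
    · rintro ⟨x, ⟨hax, hxb⟩, rfl⟩
      exact ⟨le_max_right _ _, max_le hxb hx₀b⟩
    · rintro ⟨hy₀, hyb⟩
      exact ⟨y, ⟨hax₀.trans hy₀, hyb⟩, max_eq_left hy₀⟩
  have hsub : Set.Icc x₀ b ⊆ Set.Icc a b := Set.Icc_subset_Icc hax₀ le_rfl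
  have hconv' : ConvexOn ℝ (m '' Set.Icc a b) f := by
    rw [himg]; exact hconv.subset hsub (convex_Icc _ _)
  have hmono : MonotoneOn f (m '' Set.Icc a b) := by
    rw [himg]
    rintro x ⟨hx₀x, hxb⟩ y ⟨hy₀, hyb⟩ hxy
    rcases eq_or_lt_of_le hx₀x with h | h
    · exact h ▸ hmin y (hsub ⟨hy₀, hyb⟩)
    · exact hconv.le_right_of_left_le'' ⟨hax₀, hx₀b⟩ (hsub ⟨hy₀, hyb⟩) h hxy
        (hmin x (hsub ⟨hx₀x, hxb⟩))
  have hmconv : ConvexOn ℝ (Set.Icc a b) m :=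
    (convexOn_id (convex_Icc a b)).sup (convexOn_const _ (convex_Icc a b))
  exact hconv'.comp hmconv hmono
end

section
/- Let f : ℝ → ℝ be convex and continuous on an interval [a,b], and let x₀ ∈ [a,b] be a point where f attains its minimum over [a,b]. Then the function x ↦ f(min x x₀) is convex on [a,b]. -/
/-!
On `[a, x₀]` the convex function `f` attains its minimum at the right endpoint, so it is
antitone there: every point of `[x, x₀]` lies on the segment from `x` to `x₀`, where `f` is
bounded by `max (f x) (f x₀) = f x`. The map `x ↦ min x x₀` is concave and sends `[a, b]` onto
`[a, x₀]`, and a convex antitone function of a concave map is convex.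
-/

open Set

theorem Set.image_min_const_Icc {α : Type*} [LinearOrder α] {a b c : α} (hc : c ∈ Icc a b) :
    (fun x => min x c) '' Icc a b = Icc a c := by
  ext y
  constructor
  · rintro ⟨x, hx, rfl⟩
    exact ⟨le_min hx.1 hc.1, min_le_right _ _⟩
  · intro hy
    exact ⟨y, ⟨hy.1, hy.2.trans hc.2⟩, min_eq_left hy.2⟩

section LinearOrderedField

variable {𝕜 β : Type*} [Field 𝕜] [LinearOrder 𝕜] [IsStrictOrderedRing 𝕜]
  [AddCommMonoid β] [LinearOrder β] [IsOrderedAddMonoid β] [Module 𝕜 β] [PosSMulStrictMono 𝕜 β]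
  {a b c : 𝕜} {f : 𝕜 → β}

theorem ConvexOn.antitoneOn_Icc_of_isMinOn_right (hf : ConvexOn 𝕜 (Icc a c) f)
    (hmin : IsMinOn f (Icc a c) c) : AntitoneOn f (Icc a c) := by
  intro x hx y hy hxy
  have hc : c ∈ Icc a c := ⟨hx.1.trans hx.2, le_rfl⟩
  have hy_seg : y ∈ segment 𝕜 x c := by
    rw [segment_eq_Icc hx.2]
    exact ⟨hxy, hy.2⟩
  calc f y ≤ max (f x) (f c) := hf.le_on_segment hx hc hy_seg
    _ = f x := max_eq_left (hmin hx)

theorem ConvexOn.comp_min_const_of_isMinOn (hc : c ∈ Icc a b) (hf : ConvexOn 𝕜 (Icc a c) f)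
    (hmin : IsMinOn f (Icc a c) c) : ConvexOn 𝕜 (Icc a b) (fun x => f (min x c)) := by
  have hmin_concave : ConcaveOn 𝕜 (Icc a b) (fun x => min x c) :=
    (concaveOn_id (convex_Icc a b)).inf (concaveOn_const c (convex_Icc a b))
  have hanti := hf.antitoneOn_Icc_of_isMinOn_right hmin
  rw [← Set.image_min_const_Icc hc] at hf hanti
  exact hf.comp_concaveOn hmin_concave hanti

end LinearOrderedField

theorem clamp_min_convex_general (a b x₀ : ℝ) (f : ℝ → ℝ)
    (hconv : ConvexOn ℝ (Set.Icc a b) f)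
    (hx₀ : x₀ ∈ Set.Icc a b)
    (hmin : ∀ x ∈ Set.Icc a b, f x₀ ≤ f x) :
    ConvexOn ℝ (Set.Icc a b) (fun x => f (min x x₀)) := by
  have hsub : Set.Icc a x₀ ⊆ Set.Icc a b := Set.Icc_subset_Icc le_rfl hx₀.2
  exact ConvexOn.comp_min_const_of_isMinOn hx₀ (hconv.subset hsub (convex_Icc a x₀))
    (fun x hx => hmin x (hsub hx))

theorem clamp_min_convex (a b x₀ : ℝ) (f : ℝ → ℝ)
    (hab : a ≤ b)
    (hconv : ConvexOn ℝ (Set.Icc a b) f)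
    (hcont : ContinuousOn f (Set.Icc a b))
    (hx₀ : x₀ ∈ Set.Icc a b)
    (hmin : ∀ x ∈ Set.Icc a b, f x₀ ≤ f x) :
    ConvexOn ℝ (Set.Icc a b) (fun x => f (min x x₀)) :=
  clamp_min_convex_general a b x₀ f hconv hx₀ hmin
end

section
/- In the Double Row Problem, a tuple (x*₁,…,x*_k) of coordinates for the double-row cells extends to a feasible solution (with coordinates for all bottom-row and top-row single cells) if and only if x*ᵢ + w(Cᵢ) + max(∑_{j=1}^{mᵢ} w(b_{ij}), ∑_{j=1}^{nᵢ} w(t_{ij})) ≤ x*_{i+1} for all i = 0,…,k, where x*₀ = x_min, w(C₀) = 0, x*_{k+1} = x_max. -/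

lemma row_iff (n : ℕ) (w : Fin n → ℝ) (a b : ℝ) (hab : a ≤ b) :
    (∃ y : Fin n → ℝ,
      (∀ j : Fin n, (j : ℕ) = 0 → a ≤ y j) ∧
      (∀ j : Fin n, ∀ h : (j : ℕ) + 1 < n, y j + w j ≤ y ⟨(j : ℕ) + 1, h⟩) ∧
      (∀ j : Fin n, (j : ℕ) = n - 1 → y j + w j ≤ b)) ↔ a + ∑ j, w j ≤ b := by
  set w' : ℕ → ℝ := fun l => if h : l < n then w ⟨l, h⟩ else 0 with hw'
  have hsum : ∑ j, w j = ∑ l ∈ Finset.range n, w' l := by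
    rw [← Fin.sum_univ_eq_sum_range]
    exact Finset.sum_congr rfl fun j _ => by simp [hw']
  constructor
  · rintro ⟨y, h0, hstep, hlast⟩
    have claim : ∀ t, ∀ h : t < n, a + ∑ l ∈ Finset.range t, w' l ≤ y ⟨t, h⟩ := by
      intro t
      induction t with
      | zero => intro h; simpa using h0 ⟨0, h⟩ rfl
      | succ t ih =>
        intro h
        have ht : t < n := by omega
        have h1 := ih ht
        have h2 := hstep ⟨t, ht⟩ h
        have h3 : w' t = w ⟨t, ht⟩ := by simp [hw', ht]
        rw [Finset.sum_range_succ]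
        linarith
    rcases Nat.eq_zero_or_pos n with hn | hn
    · rw [hsum, hn]; simpa using hab
    · have h1 := claim (n - 1) (by omega)
      have h2 := hlast ⟨n - 1, by omega⟩ rfl
      have h3 : w' (n - 1) = w ⟨n - 1, by omega⟩ := by simp [hw', Nat.sub_lt hn]
      have h4 : ∑ l ∈ Finset.range n, w' l
          = (∑ l ∈ Finset.range (n - 1), w' l) + w' (n - 1) := by
        conv_lhs => rw [show n = (n - 1) + 1 from (Nat.succ_pred_eq_of_pos hn).symm]
        rw [Finset.sum_range_succ]
      rw [hsum, h4]; linarith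
  · intro hb
    refine ⟨fun j => a + ∑ l ∈ Finset.range (j : ℕ), w' l, ?_, ?_, ?_⟩
    · intro j hj; simp [hj]
    · intro j h
      dsimp only
      rw [Finset.sum_range_succ]
      have h3 : w' (j : ℕ) = w j := by simp [hw', j.2]
      linarith [le_of_eq h3.symm]
    · intro j hj
      have hn : 0 < n := j.pos
      have h3 : w' (j : ℕ) = w j := by simp [hw', j.2]
      have h4 : ∑ l ∈ Finset.range n, w' l
          = (∑ l ∈ Finset.range (n - 1), w' l) + w' (n - 1) := by
        conv_lhs => rw [show n = (n - 1) + 1 from (Nat.succ_pred_eq_of_pos hn).symm]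
        rw [Finset.sum_range_succ]
      dsimp only
      rw [hj, ← h3, hj]
      rw [hsum, h4] at hb
      linarith

/-- Proposition 5 (feasibility criterion of the Double Row Problem).
`x : Fin (k+2) → ℝ` carries the sentinel `x 0 = x_min`, the double-row cell
coordinates `x 1, …, x k`, and the sentinel `x (k+1) = x_max`.
`w i` is the width of the double-row cell `Cᵢ` (with `w 0 = 0` for the sentinel
`C₀`).  In gap `i` (between `Cᵢ` and `Cᵢ₊₁`) there are `m i` bottom-row cells of
widths `wb i j` and `nn i` top-row cells of widths `wt i j`, to be placed in
their given left-to-right order. -/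
theorem double_row_feasibility (k : ℕ)
    (x : Fin (k + 2) → ℝ) (w : Fin (k + 1) → ℝ)
    (m nn : Fin (k + 1) → ℕ)
    (wb : (i : Fin (k + 1)) → Fin (m i) → ℝ)
    (wt : (i : Fin (k + 1)) → Fin (nn i) → ℝ)
    (hw0 : w 0 = 0)
    (hwpos : ∀ i : Fin (k + 1), i ≠ 0 → 0 < w i)
    (hwb : ∀ i j, 0 < wb i j)
    (hwt : ∀ i j, 0 < wt i j) :
    ((∀ i : Fin (k + 1), x i.castSucc + w i ≤ x i.succ) ∧
      ∃ y : (i : Fin (k + 1)) → Fin (m i) → ℝ,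
      ∃ z : (i : Fin (k + 1)) → Fin (nn i) → ℝ,
        (∀ i : Fin (k + 1),
          (∀ j : Fin (m i), (j : ℕ) = 0 → x i.castSucc + w i ≤ y i j) ∧
          (∀ j : Fin (m i), ∀ h : (j : ℕ) + 1 < m i,
            y i j + wb i j ≤ y i ⟨(j : ℕ) + 1, h⟩) ∧
          (∀ j : Fin (m i), (j : ℕ) = m i - 1 → y i j + wb i j ≤ x i.succ)) ∧
        (∀ i : Fin (k + 1),
          (∀ j : Fin (nn i), (j : ℕ) = 0 → x i.castSucc + w i ≤ z i j) ∧
          (∀ j : Fin (nn i), ∀ h : (j : ℕ) + 1 < nn i,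
            z i j + wt i j ≤ z i ⟨(j : ℕ) + 1, h⟩) ∧
          (∀ j : Fin (nn i), (j : ℕ) = nn i - 1 → z i j + wt i j ≤ x i.succ)))
    ↔ ∀ i : Fin (k + 1),
        x i.castSucc + w i + max (∑ j, wb i j) (∑ j, wt i j) ≤ x i.succ := by
  have hmax : ∀ i : Fin (k + 1), 0 ≤ max (∑ j, wb i j) (∑ j, wt i j) := fun i =>
    le_max_of_le_left (Finset.sum_nonneg fun j _ => (hwb i j).le)
  constructor
  · rintro ⟨hx, y, z, hy, hz⟩ i
    have h1 := (row_iff (m i) (wb i) (x i.castSucc + w i) (x i.succ) (hx i)).mp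
      ⟨y i, (hy i).1, (hy i).2.1, (hy i).2.2⟩
    have h2 := (row_iff (nn i) (wt i) (x i.castSucc + w i) (x i.succ) (hx i)).mp
      ⟨z i, (hz i).1, (hz i).2.1, (hz i).2.2⟩
    rcases max_cases (∑ j, wb i j) (∑ j, wt i j) with ⟨h, _⟩ | ⟨h, _⟩ <;>
      rw [h] <;> linarith
  · intro hs
    have hx : ∀ i : Fin (k + 1), x i.castSucc + w i ≤ x i.succ := fun i => by
      have := hs i; have := hmax i; linarith
    choose y hy using fun i : Fin (k + 1) =>
      (row_iff (m i) (wb i) (x i.castSucc + w i) (x i.succ) (hx i)).mpr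
        (by have := hs i; have := le_max_left (∑ j, wb i j) (∑ j, wt i j); linarith)
    choose z hz using fun i : Fin (k + 1) =>
      (row_iff (nn i) (wt i) (x i.castSucc + w i) (x i.succ) (hx i)).mpr
        (by have := hs i; have := le_max_right (∑ j, wb i j) (∑ j, wt i j); linarith)
    exact ⟨hx, y, z, hy, hz⟩
end
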